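/- arXiv:2204.03553 — 2 statements merged into one kernel-verified Lean document; each statement's English description precedes it below -/
import Mathlib

section
/- Let X ⊆ ω and let A be a pca with a strongly X-effectively pca-valued partial numbering γ. Then there exists an embedding of pcas f : A ↪ K1^X. -/
namespace PCAEmb

/-! ### Oracle computability -/

/-- Codes for partial functions computable relative to an oracle. -/
inductive OCode : Type
  | zero : OCode
  | succ : OCode
  | left : OCode
  | right : OCode
  | oracle : OCode
  | pair : OCode → OCode → OCode
  | comp : OCode → OCode → OCode
  | prec : OCode → OCode → OCode
  | rfind' : OCode → OCode

/-- Evaluation of an oracle code, relative to a (partial) oracle `O`. -/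
def evalo (O : ℕ →. ℕ) : OCode → ℕ →. ℕ
  | .zero => pure 0
  | .succ => Nat.succ
  | .left => ↑fun n : ℕ => n.unpair.1
  | .right => ↑fun n : ℕ => n.unpair.2
  | .oracle => O
  | .pair cf cg => fun n => Nat.pair <$> evalo O cf n <*> evalo O cg n
  | .comp cf cg => fun n => evalo O cg n >>= evalo O cf
  | .prec cf cg =>
      Nat.unpaired fun a n =>
        n.rec (evalo O cf a) fun y IH => do
          let i ← IH
          evalo O cg (Nat.pair a (Nat.pair y i))
  | .rfind' cf =>
      Nat.unpaired fun a m =>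
        (Nat.rfind fun n => (fun x => x = 0) <$> evalo O cf (Nat.pair a (n + m))).map (· + m)

/-- The standard numbering of oracle codes. -/
def OCode.ofNat : ℕ → OCode
  | 0 => .zero
  | 1 => .succ
  | 2 => .left
  | 3 => .right
  | 4 => .oracle
  | n + 5 =>
    match n % 4 with
    | 0 => .pair (OCode.ofNat (n / 4).unpair.1) (OCode.ofNat (n / 4).unpair.2)
    | 1 => .comp (OCode.ofNat (n / 4).unpair.1) (OCode.ofNat (n / 4).unpair.2)
    | 2 => .prec (OCode.ofNat (n / 4).unpair.1) (OCode.ofNat (n / 4).unpair.2)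
    | _ => .rfind' (OCode.ofNat (n / 4).unpair.1)
  decreasing_by
    all_goals
      have h1 := Nat.unpair_left_le (n / 4)
      have h2 := Nat.unpair_right_le (n / 4)
      have h3 := Nat.div_le_self n 4
      omega

/-- The `e`-th Turing functional with oracle `O` : `Φ_e^O`. -/
def phi (O : ℕ →. ℕ) (e : ℕ) : ℕ →. ℕ := evalo O (OCode.ofNat e)

/-- The characteristic function of a set of naturals, as a (total) partial function. -/
noncomputable def chi (X : Set ℕ) : ℕ →. ℕ :=
  fun n => Part.some (X.indicator (fun _ => 1) n)

/-- `ψ` is partial computable relative to the oracle `O`. -/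
def RecursiveIn (O : ℕ →. ℕ) (ψ : ℕ →. ℕ) : Prop := ∃ c : OCode, evalo O c = ψ

/-- Turing reducibility of sets of naturals. -/
def TuringLE (X Y : Set ℕ) : Prop := RecursiveIn (chi Y) (chi X)

/-- A total function `d : ℕ → ℕ` is `Y`-computable. -/
def ComputableIn (Y : Set ℕ) (d : ℕ → ℕ) : Prop :=
  RecursiveIn (chi Y) (fun n => Part.some (d n))

/-- A binary relation on `ℕ` is `Y`-c.e. -/
def CEIn (Y : Set ℕ) (R : ℕ → ℕ → Prop) : Prop :=
  ∃ c : OCode, ∀ n m, R n m ↔ (evalo (chi Y) c (Nat.pair n m)).Dom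

/-- A set `W ⊆ ℕ` is `Y`-c.e. -/
def CE1In (Y : Set ℕ) (W : Set ℕ) : Prop :=
  ∃ c : OCode, ∀ n, n ∈ W ↔ (evalo (chi Y) c n).Dom

/-- The canonical finite set `D_u` with code `u` (binary coding). -/
def Du (u : ℕ) : Set ℕ := {k | u.testBit k}

/-- Enumeration reducibility: `Z ≤ₑ Y`. -/
def EnumLE (Z Y : Set ℕ) : Prop :=
  ∃ W : Set ℕ, CE1In ∅ W ∧ ∀ x, x ∈ Z ↔ ∃ u, Nat.pair x u ∈ W ∧ Du u ⊆ Y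

/-- The Turing jump `X'` of a set `X`. -/
def jump (X : Set ℕ) : Set ℕ := {e | (phi (chi X) e e).Dom}

/-- The halting set `K = {e : φ_e(e)↓}`. -/
def Khalt : Set ℕ := jump ∅

/-! ### Partial combinatory algebras -/

/-- `k·a·b` as a partial element. -/
def app2 {α : Type*} (app : α → α → Part α) (a b c : α) : Part α :=
  (app a b).bind fun x => app x c

/-- `s·a·b·c` as a partial element. -/
def app3 {α : Type*} (app : α → α → Part α) (a b c d : α) : Part α :=
  (app2 app a b c).bind fun x => app x d

/-- A partial applicative structure is a pca if it has (distinct) combinators `s` and `k`. -/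
def IsPCA {α : Type*} (app : α → α → Part α) : Prop :=
  ∃ s k : α, s ≠ k ∧
    (∀ a b : α, app2 app k a b = Part.some a) ∧
    (∀ a b : α, (app2 app s a b).Dom) ∧
    (∀ a b c : α,
      app3 app s a b c = (app a c).bind fun x => (app b c).bind fun y => app x y)

/-- An embedding of partial combinatory algebras: an injection that preserves
(defined) application. -/
def IsPCAEmbedding {α β : Type*} (appA : α → α → Part α) (appB : β → β → Part β)
    (f : α → β) : Prop :=
  Function.Injective f ∧ ∀ a a' c : α, c ∈ appA a a' → f c ∈ appB (f a) (f a')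

/-! ### Partial numberings -/

/-- `γ : ℕ ⇀ α` is a partial numbering (i.e. surjective). -/
def IsNumbering {α : Type*} (γ : ℕ →. α) : Prop := ∀ a : α, ∃ n, a ∈ γ n

/-- `d` is an `(a⊥, a⊤)`-decider for `X` with respect to `γ`. -/
def IsDecider {α : Type*} (γ : ℕ →. α) (abot atop : α) (X : Set ℕ) (d : ℕ → ℕ) : Prop :=
  ∀ n, (n ∉ X → γ (d n) = Part.some abot) ∧ (n ∈ X → γ (d n) = Part.some atop)

/-- `γ` has `Y`-c.e. inequivalence. -/
def CEInequiv {α : Type*} (Y : Set ℕ) (γ : ℕ →. α) : Prop :=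
  ∃ R : ℕ → ℕ → Prop, CEIn Y R ∧
    ∀ n m, (γ n).Dom → (γ m).Dom → (R n m ↔ γ n ≠ γ m)

/-- `γ` is a `Y`-effectively pca-valued partial numbering: the application is
represented on codes by a partial `Y`-computable function `ψ`. -/
def EffValued {α : Type*} (Y : Set ℕ) (app : α → α → Part α) (γ : ℕ →. α) : Prop :=
  ∃ ψ : ℕ →. ℕ, RecursiveIn (chi Y) ψ ∧
    ∀ (n m : ℕ) (a b c : α), a ∈ γ n → b ∈ γ m → c ∈ app a b →
      ∃ j, j ∈ ψ (Nat.pair n m) ∧ c ∈ γ j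

/-- `γ` is a strongly `Y`-effectively pca-valued partial numbering. -/
def StrongEffValued {α : Type*} (Y : Set ℕ) (app : α → α → Part α) (γ : ℕ →. α) : Prop :=
  ∃ ψ : ℕ →. ℕ, RecursiveIn (chi Y) ψ ∧
    (∀ (n m : ℕ) (a b c : α), a ∈ γ n → b ∈ γ m → c ∈ app a b →
      ∃ j, j ∈ ψ (Nat.pair n m) ∧ c ∈ γ j) ∧
    (∀ (n m k l : ℕ) (a b a' b' c : α), a ∈ γ n → b ∈ γ m → a' ∈ γ k → b' ∈ γ l →
      c ∈ app a b → c ∈ app a' b' → ψ (Nat.pair n m) = ψ (Nat.pair k l))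

/-! ### The models -/

/-- Kleene's first model relativized to `X`: application `n · m = Φ_n^X(m)`. -/
noncomputable def k1App (X : Set ℕ) : ℕ → ℕ → Part ℕ := fun n m => phi (chi X) n m

/-- A total function as a partial function. -/
def toPFun (g : ℕ → ℕ) : ℕ →. ℕ := fun n => Part.some (g n)

/-- Join `f ⊕ g` of two partial functions. -/
def pjoin (f g : ℕ →. ℕ) : ℕ →. ℕ := fun n =>
  if n % 2 = 0 then f (n / 2) else g (n / 2)

/-- The totalization of a partial function, as a partial element of `ℕ → ℕ`:
defined iff `ψ` is total. -/
def partToTotal (ψ : ℕ →. ℕ) : Part (ℕ → ℕ) :=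
  ⟨∀ n, (ψ n).Dom, fun H n => (ψ n).get (H n)⟩

/-- Application in Kleene's second model `K₂`: `g · h = Φ^{g⊕h}_{g 0}`,
defined iff this function is total. -/
def k2App (g h : ℕ → ℕ) : Part (ℕ → ℕ) :=
  partToTotal (phi (pjoin (toPFun g) (toPFun h)) (g 0))

/-- Application in van Oosten's sequential model `B`: `θ · ρ = Φ^{θ⊕ρ}_{θ 0}`
(always defined, as a partial function). -/
def bApp (θ ρ : ℕ →. ℕ) : Part (ℕ →. ℕ) :=
  Part.some (fun n => (θ 0).bind fun e => phi (pjoin θ ρ) e n)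

/-- Restriction of a partial applicative structure to a subset. -/
def subApp {α : Type*} (app : α → α → Part α) (P : α → Prop)
    (a b : Subtype P) : Part (Subtype P) :=
  (app a.1 b.1).bind fun c => Part.assert (P c) fun h => Part.some ⟨c, h⟩

/-- Carrier of `K₂^X` : the total `X`-computable functions. -/
def K2el (X : Set ℕ) : Type := {g : ℕ → ℕ // RecursiveIn (chi X) (toPFun g)}

/-- Application in `K₂^X`. -/
def k2XApp (X : Set ℕ) : K2el X → K2el X → Part (K2el X) :=
  subApp k2App _

/-- Carrier of `B^X` : the partial `X`-computable functions. -/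
def Bel (X : Set ℕ) : Type := {θ : ℕ →. ℕ // RecursiveIn (chi X) θ}

/-- Application in `B^X`. -/
def bXApp (X : Set ℕ) : Bel X → Bel X → Part (Bel X) :=
  subApp bApp _

/-- Application in Scott's graph model `G`. -/
def gApp (A B : Set ℕ) : Part (Set ℕ) :=
  Part.some {n | ∃ u, Nat.pair n u ∈ A ∧ Du u ⊆ B}

/-- Carrier of `G^Z` : the sets enumeration-reducible to `Z`. -/
def Gel (Z : Set ℕ) : Type := {A : Set ℕ // EnumLE A Z}

/-- Application in `G^Z`. -/
def gXApp (Z : Set ℕ) : Gel Z → Gel Z → Part (Gel Z) :=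
  subApp gApp _

/-- `X ⊕ X̄ = {2n : n ∈ X} ∪ {2n+1 : n ∉ X}`. -/
def joinCompl (X : Set ℕ) : Set ℕ :=
  {k | ∃ n, (k = 2 * n ∧ n ∈ X) ∨ (k = 2 * n + 1 ∧ n ∉ X)}

/-! ### The λ-calculus -/

/-- Untyped λ-terms (de Bruijn representation). -/
inductive Lam : Type
  | var : ℕ → Lam
  | app : Lam → Lam → Lam
  | abs : Lam → Lam

/-- Lift (shift up) the free variables `≥ d` of a term. -/
def Lam.lift : Lam → ℕ → Lam
  | .var n, d => if n < d then .var n else .var (n + 1)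
  | .app M N, d => .app (M.lift d) (N.lift d)
  | .abs M, d => .abs (M.lift (d + 1))

/-- Substitution `M[k := N]` (de Bruijn). -/
def Lam.subst : Lam → ℕ → Lam → Lam
  | .var n, k, N => if n = k then N else if k < n then .var (n - 1) else .var n
  | .app M M', k, N => .app (M.subst k N) (M'.subst k N)
  | .abs M, k, N => .abs (M.subst (k + 1) (N.lift 0))

/-- β-equivalence of λ-terms. -/
inductive BetaEq : Lam → Lam → Prop
  | beta (M N : Lam) : BetaEq (.app (.abs M) N) (M.subst 0 N)
  | refl (M : Lam) : BetaEq M M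
  | symm {M N : Lam} : BetaEq M N → BetaEq N M
  | trans {M N P : Lam} : BetaEq M N → BetaEq N P → BetaEq M P
  | appCongr {M M' N N' : Lam} :
      BetaEq M M' → BetaEq N N' → BetaEq (.app M N) (.app M' N')
  | absCongr {M M' : Lam} : BetaEq M M' → BetaEq (.abs M) (.abs M')

/-- βη-equivalence of λ-terms. -/
inductive BetaEtaEq : Lam → Lam → Prop
  | beta (M N : Lam) : BetaEtaEq (.app (.abs M) N) (M.subst 0 N)
  | eta (M : Lam) : BetaEtaEq (.abs (.app (M.lift 0) (.var 0))) M
  | refl (M : Lam) : BetaEtaEq M M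
  | symm {M N : Lam} : BetaEtaEq M N → BetaEtaEq N M
  | trans {M N P : Lam} : BetaEtaEq M N → BetaEtaEq N P → BetaEtaEq M P
  | appCongr {M M' N N' : Lam} :
      BetaEtaEq M M' → BetaEtaEq N N' → BetaEtaEq (.app M N) (.app M' N')
  | absCongr {M M' : Lam} : BetaEtaEq M M' → BetaEtaEq (.abs M) (.abs M')

def lamBetaSetoid : Setoid Lam := ⟨BetaEq, ⟨BetaEq.refl, BetaEq.symm, BetaEq.trans⟩⟩

def lamBetaEtaSetoid : Setoid Lam :=
  ⟨BetaEtaEq, ⟨BetaEtaEq.refl, BetaEtaEq.symm, BetaEtaEq.trans⟩⟩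

/-- The pca `λ` of λ-terms modulo β-equivalence. -/
def LamBeta : Type := Quotient lamBetaSetoid

/-- The pca `λη` of λ-terms modulo βη-equivalence. -/
def LamBetaEta : Type := Quotient lamBetaEtaSetoid

/-- Application in `λ` (total). -/
def lamBetaApp : LamBeta → LamBeta → Part LamBeta := fun a b =>
  Part.some (Quotient.map₂ Lam.app (fun _ _ h1 _ _ h2 => BetaEq.appCongr h1 h2) a b)

/-- Application in `λη` (total). -/
def lamBetaEtaApp : LamBetaEta → LamBetaEta → Part LamBetaEta := fun a b =>
  Part.some (Quotient.map₂ Lam.app (fun _ _ h1 _ _ h2 => BetaEtaEq.appCongr h1 h2) a b)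


def OCode.toNat : OCode → ℕ
  | .zero => 0
  | .succ => 1
  | .left => 2
  | .right => 3
  | .oracle => 4
  | .pair a b => 4 * Nat.pair a.toNat b.toNat + 5
  | .comp a b => 4 * Nat.pair a.toNat b.toNat + 6
  | .prec a b => 4 * Nat.pair a.toNat b.toNat + 7
  | .rfind' a => 4 * Nat.pair a.toNat a.toNat + 8

theorem ofNat_pair (k : ℕ) :
    OCode.ofNat (4*k+5) = .pair (OCode.ofNat k.unpair.1) (OCode.ofNat k.unpair.2) := by
  rw [show 4*k+5 = (4*k)+5 from rfl, OCode.ofNat]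
  simp [Nat.mul_mod_right, Nat.mul_div_cancel_left]

theorem ofNat_comp (k : ℕ) :
    OCode.ofNat (4*k+6) = .comp (OCode.ofNat k.unpair.1) (OCode.ofNat k.unpair.2) := by
  rw [show 4*k+6 = (4*k+1)+5 from rfl, OCode.ofNat]
  have h1 : (4*k+1) % 4 = 1 := by omega
  have h2 : (4*k+1) / 4 = k := by omega
  simp [h1, h2]

theorem ofNat_prec (k : ℕ) :
    OCode.ofNat (4*k+7) = .prec (OCode.ofNat k.unpair.1) (OCode.ofNat k.unpair.2) := by
  rw [show 4*k+7 = (4*k+2)+5 from rfl, OCode.ofNat]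
  have h1 : (4*k+2) % 4 = 2 := by omega
  have h2 : (4*k+2) / 4 = k := by omega
  simp [h1, h2]

theorem ofNat_rfind' (k : ℕ) :
    OCode.ofNat (4*k+8) = .rfind' (OCode.ofNat k.unpair.1) := by
  rw [show 4*k+8 = (4*k+3)+5 from rfl, OCode.ofNat]
  have h1 : (4*k+3) % 4 = 3 := by omega
  have h2 : (4*k+3) / 4 = k := by omega
  simp [h1, h2]

theorem OCode.ofNat_toNat : ∀ c : OCode, OCode.ofNat c.toNat = c
  | .zero => by rw [OCode.toNat, OCode.ofNat]
  | .succ => by rw [OCode.toNat, OCode.ofNat]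
  | .left => by rw [OCode.toNat, OCode.ofNat]
  | .right => by rw [OCode.toNat, OCode.ofNat]
  | .oracle => by rw [OCode.toNat, OCode.ofNat]
  | .pair a b => by
      rw [OCode.toNat, ofNat_pair]
      simp [OCode.ofNat_toNat a, OCode.ofNat_toNat b]
  | .comp a b => by
      rw [OCode.toNat, ofNat_comp]
      simp [OCode.ofNat_toNat a, OCode.ofNat_toNat b]
  | .prec a b => by
      rw [OCode.toNat, ofNat_prec]
      simp [OCode.ofNat_toNat a, OCode.ofNat_toNat b]
  | .rfind' a => by
      rw [OCode.toNat, ofNat_rfind']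
      simp [OCode.ofNat_toNat a]

/-- Translate a Mathlib partial-recursive code to an oracle code. -/
def trO : Nat.Partrec.Code → OCode
  | .zero => .zero
  | .succ => .succ
  | .left => .left
  | .right => .right
  | .pair a b => .pair (trO a) (trO b)
  | .comp a b => .comp (trO a) (trO b)
  | .prec a b => .prec (trO a) (trO b)
  | .rfind' a => .rfind' (trO a)

theorem evalo_trO (O : ℕ →. ℕ) : ∀ c : Nat.Partrec.Code, evalo O (trO c) = c.eval := by
  intro c
  induction c with
  | zero => rfl
  | succ => rfl
  | left => rfl
  | right => rfl
  | pair a b ha hb => simp [trO, evalo, Nat.Partrec.Code.eval, ha, hb]; rfl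
  | comp a b ha hb => simp [trO, evalo, Nat.Partrec.Code.eval, ha, hb]; rfl
  | prec a b ha hb => simp [trO, evalo, Nat.Partrec.Code.eval, ha, hb]; rfl
  | rfind' a ha => simp [trO, evalo, Nat.Partrec.Code.eval, ha]; rfl

theorem ocode_of_partrec {f : ℕ →. ℕ} (h : Nat.Partrec f) (O : ℕ →. ℕ) :
    ∃ c : OCode, evalo O c = f := by
  obtain ⟨c, hc⟩ := Nat.Partrec.Code.exists_code.1 h
  exact ⟨trO c, by rw [evalo_trO, hc]⟩

/-- Identity code. -/
def idC : OCode := .pair .left .right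

theorem evalo_idC (O : ℕ →. ℕ) (x : ℕ) : evalo O idC x = Part.some x := by
  simp [idC, evalo, Seq.seq, Part.bind_some]

/-- Constant code. -/
def constC : ℕ → OCode
  | 0 => .zero
  | n+1 => .comp .succ (constC n)

theorem evalo_constC (O : ℕ →. ℕ) (n x : ℕ) : evalo O (constC n) x = Part.some n := by
  induction n with
  | zero => rfl
  | succ n ih => simp [constC, evalo, ih]; exact Part.bind_some n _

/-- `x ↦ Nat.pair n x`. -/
def argC (n : ℕ) : OCode := .pair (constC n) idC

theorem evalo_argC (O : ℕ →. ℕ) (n x : ℕ) :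
    evalo O (argC n) x = Part.some (Nat.pair n x) := by
  have h : evalo O (argC n) x = Nat.pair <$> evalo O (constC n) x <*> evalo O idC x := rfl
  rw [h, evalo_constC, evalo_idC]
  simp [Seq.seq]

def FC (D : OCode) (n : ℕ) : OCode := .comp D (argC n)

theorem evalo_FC (O : ℕ →. ℕ) (D : OCode) (n x : ℕ) :
    evalo O (FC D n) x = evalo O D (Nat.pair n x) := by
  have h : evalo O (FC D n) x = evalo O (argC n) x >>= evalo O D := rfl
  rw [h, evalo_argC]; exact Part.bind_some _ (evalo O D)

/-- `toNat` of the constant codes. -/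
def cnum : ℕ → ℕ := fun n => Nat.rec 0 (fun _ ih => 4 * Nat.pair 1 ih + 6) n

theorem cnum_eq (n : ℕ) : cnum n = (constC n).toNat := by
  induction n with
  | zero => rfl
  | succ n ih => simp [cnum, constC, OCode.toNat] at *; rw [ih]

theorem cnum_strictMono : StrictMono cnum := by
  apply strictMono_nat_of_lt_succ
  intro n
  have := Nat.right_le_pair 1 (cnum n)
  show cnum n < 4 * Nat.pair 1 (cnum n) + 6
  omega

theorem le_cnum (n : ℕ) : n ≤ cnum n := cnum_strictMono.le_apply

/-- Inverse of `cnum` by bounded search. -/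
def cinv (c : ℕ) : ℕ :=
  Nat.rec 0 (fun k acc => if cnum (k+1) = c then k+1 else acc) c

theorem cinv_cnum (n : ℕ) : cinv (cnum n) = n := by
  have key : ∀ m, n ≤ m → Nat.rec 0
      (fun k acc => if cnum (k+1) = cnum n then k+1 else acc) m = n := by
    intro m hm
    induction m with
    | zero => simpa using (hm.antisymm (Nat.zero_le n)).symm
    | succ m ih =>
      rcases Nat.lt_or_ge m n with h | h
      · have hn : n = m + 1 := by omega
        simp [← hn]
      · have hne : cnum (m+1) ≠ cnum n := fun he => by
          have := cnum_strictMono.injective he; omega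
        simpa [hne] using ih h
  exact key (cnum n) (le_cnum n)

theorem primrec_cnum : Primrec cnum := by
  apply Primrec.nat_rec₁
  exact Primrec₂.comp (Primrec.nat_add) (Primrec.nat_mul.comp (Primrec.const 4)
    (Primrec₂.natPair.comp (Primrec.const 1) Primrec.snd)).to₂ (Primrec₂.const 6)

theorem primrec_cinv : Primrec cinv := by
  have h2 : Primrec₂ (fun (c : ℕ) (p : ℕ × ℕ) => if cnum (p.1+1) = c then p.1+1 else p.2) := by
    apply Primrec.ite
    · exact PrimrecRel.comp Primrec.eq
        (primrec_cnum.comp (Primrec.succ.comp (Primrec.fst.comp Primrec.snd))) Primrec.fst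
    · exact Primrec.succ.comp (Primrec.fst.comp Primrec.snd)
    · exact Primrec.snd.comp Primrec.snd
  exact (Primrec.nat_rec' Primrec.id (Primrec.const 0) h2).of_eq (fun c => rfl)

def itn : ℕ := idC.toNat

/-- The index of the code `FC D n`. -/
def fIdx (D : OCode) (n : ℕ) : ℕ := (FC D n).toNat

theorem fIdx_eq (D : OCode) (n : ℕ) :
    fIdx D n = 4 * Nat.pair D.toNat (4 * Nat.pair (cnum n) itn + 5) + 6 := by
  simp [fIdx, FC, argC, OCode.toNat, ← cnum_eq, itn]

theorem fIdx_inj (D : OCode) : Function.Injective (fIdx D) := by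
  intro n m h
  rw [fIdx_eq, fIdx_eq] at h
  have h2 : Nat.pair D.toNat (4 * Nat.pair (cnum n) itn + 5)
      = Nat.pair D.toNat (4 * Nat.pair (cnum m) itn + 5) := by omega
  have h3 := (Nat.pair_eq_pair.1 h2).2
  have h4 : Nat.pair (cnum n) itn = Nat.pair (cnum m) itn := by omega
  exact cnum_strictMono.injective (Nat.pair_eq_pair.1 h4).1

/-- Recover `m` from `fIdx D m`. -/
def dec (x : ℕ) : ℕ := cinv ((((x - 6)/4).unpair.2 - 5)/4).unpair.1

/-- Recover `D.toNat` from `fIdx D m`. -/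
def dnumOf (x : ℕ) : ℕ := ((x - 6)/4).unpair.1

theorem dec_fIdx (D : OCode) (m : ℕ) : dec (fIdx D m) = m := by
  rw [fIdx_eq]
  unfold dec
  have h1 : (4 * Nat.pair D.toNat (4 * Nat.pair (cnum m) itn + 5) + 6 - 6) / 4
      = Nat.pair D.toNat (4 * Nat.pair (cnum m) itn + 5) := by omega
  rw [h1, Nat.unpair_pair]
  have h2 : (4 * Nat.pair (cnum m) itn + 5 - 5) / 4 = Nat.pair (cnum m) itn := by omega
  rw [h2, Nat.unpair_pair]
  exact cinv_cnum m

theorem dnumOf_fIdx (D : OCode) (m : ℕ) : dnumOf (fIdx D m) = D.toNat := by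
  rw [fIdx_eq]
  unfold dnumOf
  have h1 : (4 * Nat.pair D.toNat (4 * Nat.pair (cnum m) itn + 5) + 6 - 6) / 4
      = Nat.pair D.toNat (4 * Nat.pair (cnum m) itn + 5) := by omega
  rw [h1, Nat.unpair_pair]

def ufun (z : ℕ) : ℕ := Nat.pair z.unpair.1 (dec z.unpair.2)

def vfun (w : ℕ) : ℕ :=
  4 * Nat.pair (dnumOf w.unpair.1.unpair.2) (4 * Nat.pair (cnum w.unpair.2) itn + 5) + 6

theorem ufun_eq (D : OCode) (n m : ℕ) : ufun (Nat.pair n (fIdx D m)) = Nat.pair n m := by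
  simp [ufun, dec_fIdx]

theorem vfun_eq (D : OCode) (n m j : ℕ) :
    vfun (Nat.pair (Nat.pair n (fIdx D m)) j) = fIdx D j := by
  simp only [vfun, Nat.unpair_pair]
  rw [dnumOf_fIdx, ← fIdx_eq]

theorem primrec_unpair1 : Primrec fun x : ℕ => x.unpair.1 :=
  Primrec.fst.comp Primrec.unpair

theorem primrec_unpair2 : Primrec fun x : ℕ => x.unpair.2 :=
  Primrec.snd.comp Primrec.unpair

theorem primrec_dec : Primrec dec := by
  unfold dec
  apply primrec_cinv.comp
  apply primrec_unpair1.comp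
  apply Primrec.nat_div.comp _ (Primrec.const 4)
  apply Primrec.nat_sub.comp _ (Primrec.const 5)
  apply primrec_unpair2.comp
  apply Primrec.nat_div.comp _ (Primrec.const 4)
  exact Primrec.nat_sub.comp Primrec.id (Primrec.const 6)

theorem primrec_dnumOf : Primrec dnumOf := by
  unfold dnumOf
  apply primrec_unpair1.comp
  apply Primrec.nat_div.comp _ (Primrec.const 4)
  exact Primrec.nat_sub.comp Primrec.id (Primrec.const 6)

theorem primrec_ufun : Primrec ufun := by
  unfold ufun
  exact Primrec₂.natPair.comp primrec_unpair1 (primrec_dec.comp primrec_unpair2)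

theorem primrec_vfun : Primrec vfun := by
  unfold vfun
  apply Primrec.nat_add.comp _ (Primrec.const 6)
  apply Primrec.nat_mul.comp (Primrec.const 4)
  apply Primrec₂.natPair.comp
    (primrec_dnumOf.comp (primrec_unpair2.comp primrec_unpair1))
  apply Primrec.nat_add.comp _ (Primrec.const 5)
  apply Primrec.nat_mul.comp (Primrec.const 4)
  exact Primrec₂.natPair.comp (primrec_cnum.comp primrec_unpair2) (Primrec.const itn)

theorem ocode_of_primrec {f : ℕ → ℕ} (h : Primrec f) (O : ℕ →. ℕ) :
    ∃ c : OCode, evalo O c = fun n => Part.some (f n) :=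
  ocode_of_partrec (Partrec.nat_iff.1 h.to_comp) O

theorem master (X : Set ℕ) (ψ : ℕ →. ℕ) (hψ : RecursiveIn (chi X) ψ) :
    ∃ D : OCode, ∀ n m j : ℕ, ψ (Nat.pair n m) = Part.some j →
      evalo (chi X) (OCode.ofNat (fIdx D n)) (fIdx D m) = Part.some (fIdx D j) := by
  obtain ⟨cψ, hcψ⟩ := hψ
  obtain ⟨cu, hcu⟩ := ocode_of_primrec primrec_ufun (chi X)
  obtain ⟨cv, hcv⟩ := ocode_of_primrec primrec_vfun (chi X)
  refine ⟨.comp cv (.pair idC (.comp cψ cu)), ?_⟩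
  intro n m j hj
  set D : OCode := .comp cv (.pair idC (.comp cψ cu)) with hD
  rw [show fIdx D n = (FC D n).toNat from rfl, OCode.ofNat_toNat, evalo_FC]
  set z := Nat.pair n (fIdx D m) with hz
  have e3 : evalo (chi X) (OCode.comp cψ cu) z = Part.some j := by
    have : evalo (chi X) (OCode.comp cψ cu) z = evalo (chi X) cu z >>= evalo (chi X) cψ := rfl
    rw [this, hcu, hcψ]
    have : ufun z = Nat.pair n m := ufun_eq D n m
    show Part.some (ufun z) >>= ψ = Part.some j
    rw [show Part.some (ufun z) >>= ψ = ψ (ufun z) from Part.bind_some (ufun z) ψ]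
    rw [this, hj]
  have e2 : evalo (chi X) (OCode.pair idC (OCode.comp cψ cu)) z
      = Part.some (Nat.pair z j) := by
    have : evalo (chi X) (OCode.pair idC (OCode.comp cψ cu)) z
        = Nat.pair <$> evalo (chi X) idC z <*> evalo (chi X) (OCode.comp cψ cu) z := rfl
    rw [this, evalo_idC, e3]
    simp [Seq.seq]
  have e1 : evalo (chi X) D z
      = (evalo (chi X) (OCode.pair idC (OCode.comp cψ cu)) z).bind (evalo (chi X) cv) := rfl
  rw [e1, e2]
  rw [show (Part.some (Nat.pair z j)).bind (evalo (chi X) cv) = evalo (chi X) cv (Nat.pair z j) from Part.bind_some _ _]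
  rw [hcv]
  show Part.some (vfun (Nat.pair (Nat.pair n (fIdx D m)) j)) = Part.some (fIdx D j)
  rw [vfun_eq]

theorem stmt3 (X : Set ℕ) (α : Type*) (app : α → α → Part α) (hpca : IsPCA app)
    (γ : ℕ →. α) (hγ : IsNumbering γ) (heff : StrongEffValued X app γ) :
    ∃ f : α → ℕ, IsPCAEmbedding app (k1App X) f := by
  classical
  obtain ⟨ψ, hψrec, hev, hstrong⟩ := heff
  choose ν hν using hγ
  obtain ⟨D, hD⟩ := master X ψ hψrec
  set S : α → Set ℕ :=
    fun a => {t | ∃ x y, a ∈ app x y ∧ ψ (Nat.pair (ν x) (ν y)) = Part.some t} with hS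
  obtain ⟨na, hna, hkey⟩ : ∃ na : α → ℕ, (∀ a, a ∈ γ (na a)) ∧
      (∀ a b c : α, c ∈ app a b → ψ (Nat.pair (na a) (na b)) = Part.some (na c)) := by
    refine ⟨fun a => if h : (S a).Nonempty then h.choose else ν a, ?_, ?_⟩
    · intro a
      by_cases h : (S a).Nonempty
      · simp only [dif_pos h]
        obtain ⟨x, y, hxy, hψv⟩ := h.choose_spec
        obtain ⟨j, hj1, hj2⟩ := hev (ν x) (ν y) x y a (hν x) (hν y) hxy
        rw [hψv, Part.mem_some_iff] at hj1
        rwa [← hj1]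
      · simp only [dif_neg h]; exact hν a
    · intro a b c hc
      have hnaa : ∀ d : α, d ∈ γ (if h : (S d).Nonempty then h.choose else ν d) := by
        intro d
        by_cases h : (S d).Nonempty
        · simp only [dif_pos h]
          obtain ⟨x, y, hxy, hψv⟩ := h.choose_spec
          obtain ⟨j, hj1, hj2⟩ := hev (ν x) (ν y) x y d (hν x) (hν y) hxy
          rw [hψv, Part.mem_some_iff] at hj1
          rwa [← hj1]
        · simp only [dif_neg h]; exact hν d
      set na' : α → ℕ := fun d => if h : (S d).Nonempty then h.choose else ν d with hna'
      obtain ⟨j, hj1, hj2⟩ := hev (na' a) (na' b) a b c (hnaa a) (hnaa b) hc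
      have hjs : ψ (Nat.pair (na' a) (na' b)) = Part.some j := Part.eq_some_iff.2 hj1
      have hnu : ψ (Nat.pair (ν a) (ν b)) = Part.some j := by
        rw [hstrong (ν a) (ν b) (na' a) (na' b) a b a b c
          (hν a) (hν b) (hnaa a) (hnaa b) hc hc]
        exact hjs
      have hne : (S c).Nonempty := ⟨j, a, b, hc, hnu⟩
      have hmem : na' c ∈ S c := by
        show (if h : (S c).Nonempty then h.choose else ν c) ∈ S c
        simp only [dif_pos hne]
        exact hne.choose_spec
      obtain ⟨x, y, hxy, hψv⟩ := hmem
      have heq : ψ (Nat.pair (ν x) (ν y)) = ψ (Nat.pair (na' a) (na' b)) :=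
        hstrong (ν x) (ν y) (na' a) (na' b) x y a b c
          (hν x) (hν y) (hnaa a) (hnaa b) hxy hc
      rw [hψv, hjs] at heq
      rw [hjs, Part.some_inj.1 heq]
  refine ⟨fun a => fIdx D (na a), ?_, ?_⟩
  · intro a b hab
    have h2 := fIdx_inj D hab
    exact Part.mem_unique (hna a) (h2 ▸ hna b)
  · intro a b c hc
    have h3 := hD (na a) (na b) (na c) (hkey a b c hc)
    show fIdx D (na c) ∈ k1App X (fIdx D (na a)) (fIdx D (na b))
    show fIdx D (na c) ∈ evalo (chi X) (OCode.ofNat (fIdx D (na a))) (fIdx D (na b))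
    rw [h3]
    exact Part.mem_some _

end PCAEmb
end

section
/- Let X ⊆ ω and let A be a pca with a strongly X-effectively pca-valued partial numbering γ. Then there exists an embedding of pcas of A into K2^X, and hence into Kleene's second model K2. -/
namespace PCAEmb

namespace OCode

/-- Numeral code of an `OCode`, a right inverse to `OCode.ofNat`. -/
def toNat_s6 : OCode → ℕ
  | .zero => 0
  | .succ => 1
  | .left => 2
  | .right => 3
  | .oracle => 4
  | .pair a b => 4 * Nat.pair a.toNat_s6 b.toNat_s6 + 5
  | .comp a b => 4 * Nat.pair a.toNat_s6 b.toNat_s6 + 1 + 5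
  | .prec a b => 4 * Nat.pair a.toNat_s6 b.toNat_s6 + 2 + 5
  | .rfind' a => 4 * Nat.pair a.toNat_s6 0 + 3 + 5

theorem ofNat_toNat_s6 : ∀ c : OCode, OCode.ofNat c.toNat_s6 = c
  | .zero => by rw [toNat_s6, OCode.ofNat]
  | .succ => by rw [toNat_s6, OCode.ofNat]
  | .left => by rw [toNat_s6, OCode.ofNat]
  | .right => by rw [toNat_s6, OCode.ofNat]
  | .oracle => by rw [toNat_s6, OCode.ofNat]
  | .pair a b => by
      rw [toNat_s6, OCode.ofNat]
      have h1 : (4 * Nat.pair a.toNat_s6 b.toNat_s6) % 4 = 0 := by omega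
      have h2 : (4 * Nat.pair a.toNat_s6 b.toNat_s6) / 4 = Nat.pair a.toNat_s6 b.toNat_s6 := by omega
      rw [h1, h2]
      simp [ofNat_toNat_s6 a, ofNat_toNat_s6 b]
  | .comp a b => by
      rw [toNat_s6, OCode.ofNat]
      have h1 : (4 * Nat.pair a.toNat_s6 b.toNat_s6 + 1) % 4 = 1 := by omega
      have h2 : (4 * Nat.pair a.toNat_s6 b.toNat_s6 + 1) / 4 = Nat.pair a.toNat_s6 b.toNat_s6 := by omega
      rw [h1, h2]
      simp [ofNat_toNat_s6 a, ofNat_toNat_s6 b]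
  | .prec a b => by
      rw [toNat_s6, OCode.ofNat]
      have h1 : (4 * Nat.pair a.toNat_s6 b.toNat_s6 + 2) % 4 = 2 := by omega
      have h2 : (4 * Nat.pair a.toNat_s6 b.toNat_s6 + 2) / 4 = Nat.pair a.toNat_s6 b.toNat_s6 := by omega
      rw [h1, h2]
      simp [ofNat_toNat_s6 a, ofNat_toNat_s6 b]
  | .rfind' a => by
      rw [toNat_s6, OCode.ofNat]
      have h1 : (4 * Nat.pair a.toNat_s6 0 + 3) % 4 = 3 := by omega
      have h2 : (4 * Nat.pair a.toNat_s6 0 + 3) / 4 = Nat.pair a.toNat_s6 0 := by omega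
      rw [h1, h2]
      simp [ofNat_toNat_s6 a]

/-- Substitute a code for the oracle. -/
def substO (c₀ : OCode) : OCode → OCode
  | .zero => .zero
  | .succ => .succ
  | .left => .left
  | .right => .right
  | .oracle => c₀
  | .pair a b => .pair (substO c₀ a) (substO c₀ b)
  | .comp a b => .comp (substO c₀ a) (substO c₀ b)
  | .prec a b => .prec (substO c₀ a) (substO c₀ b)
  | .rfind' a => .rfind' (substO c₀ a)

theorem evalo_substO (O : ℕ →. ℕ) (c₀ : OCode) :
    ∀ c : OCode, PCAEmb.evalo O (substO c₀ c) = PCAEmb.evalo (PCAEmb.evalo O c₀) c := by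
  intro c
  induction c <;> simp [substO, PCAEmb.evalo, *] <;> rfl

/-- Embedding of ordinary partial recursive codes. -/
def ofPCode : Nat.Partrec.Code → OCode
  | .zero => .zero
  | .succ => .succ
  | .left => .left
  | .right => .right
  | .pair a b => .pair (ofPCode a) (ofPCode b)
  | .comp a b => .comp (ofPCode a) (ofPCode b)
  | .prec a b => .prec (ofPCode a) (ofPCode b)
  | .rfind' a => .rfind' (ofPCode a)

theorem evalo_ofPCode (O : ℕ →. ℕ) :
    ∀ c : Nat.Partrec.Code, PCAEmb.evalo O (ofPCode c) = c.eval := by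
  intro c
  induction c <;> simp [ofPCode, PCAEmb.evalo, Nat.Partrec.Code.eval, *] <;> rfl

end OCode

theorem pbind_some (a : ℕ) (f : ℕ →. ℕ) : Part.some a >>= f = f a := Part.bind_some a f

theorem pbind_some' (a : ℕ) (f : ℕ →. ℕ) : (Part.some a).bind f = f a := Part.bind_some a f

/-- Every computable total function has an `OCode` valid for every oracle. -/
theorem exists_ocode_of_computable {f : ℕ → ℕ} (hf : Computable f) :
    ∃ c : OCode, ∀ (O : ℕ →. ℕ) (n : ℕ), evalo O c n = Part.some (f n) := by
  obtain ⟨c, hc⟩ := Nat.Partrec.Code.exists_code.1 (Partrec.nat_iff.1 hf.partrec)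
  exact ⟨OCode.ofPCode c, fun O n => by rw [OCode.evalo_ofPCode, hc]; rfl⟩

theorem stmt6 (X : Set ℕ) (α : Type*) (app : α → α → Part α) (hpca : IsPCA app)
    (γ : ℕ →. α) (hγ : IsNumbering γ) (heff : StrongEffValued X app γ) :
    (∃ f : α → K2el X, IsPCAEmbedding app (k2XApp X) f) ∧
    (∃ f : α → (ℕ → ℕ), IsPCAEmbedding app k2App f) := by
  classical
  obtain ⟨ψ, ⟨cψ, hcψ⟩, h1, h2⟩ := heff
  -- canonical codes
  have key : ∀ c : α, ∃ j : ℕ, c ∈ γ j ∧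
      ∀ (a b : α) (n m : ℕ), a ∈ γ n → b ∈ γ m → c ∈ app a b → j ∈ ψ (Nat.pair n m) := by
    obtain ⟨s, k, _, hk, _, _⟩ := hpca
    intro c
    have hc : c ∈ app2 app k c k := by rw [hk c k]; exact Part.mem_some c
    simp only [app2, Part.mem_bind_iff] at hc
    obtain ⟨x, hx, hcx⟩ := hc
    obtain ⟨nx, hnx⟩ := hγ x
    obtain ⟨nk, hnk⟩ := hγ k
    obtain ⟨j, hjψ, hjγ⟩ := h1 nx nk x k c hnx hnk hcx
    refine ⟨j, hjγ, fun a b n m ha hb hab => ?_⟩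
    have heq := h2 nx nk n m x k a b c hnx hnk ha hb hcx hab
    rwa [heq] at hjψ
  choose code hcode1 hcode2 using key
  have codeInj : Function.Injective code := fun a a' h =>
    Part.mem_unique (hcode1 a) (h ▸ hcode1 a')
  have happ : ∀ a b c : α, c ∈ app a b →
      ψ (Nat.pair (code a) (code b)) = Part.some (code c) := fun a b c hc =>
    Part.eq_some_iff.2 (hcode2 c a b (code a) (code b) (hcode1 a) (hcode1 b) hc)
  -- computable helper codes
  have pu1 : Primrec fun z : ℕ => z.unpair.1 := Primrec.fst.comp Primrec.unpair
  have pu2 : Primrec fun z : ℕ => z.unpair.2 := Primrec.snd.comp Primrec.unpair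
  obtain ⟨clin, hclin⟩ := exists_ocode_of_computable (f := fun n : ℕ => 2 * n + 4)
    (Primrec.nat_add.comp (Primrec.nat_mul.comp (Primrec.const 2) Primrec.id)
      (Primrec.const 4)).to_comp
  obtain ⟨cdbl, hcdbl⟩ := exists_ocode_of_computable (f := fun n : ℕ => 2 * n)
    (Primrec.nat_mul.comp (Primrec.const 2) Primrec.id).to_comp
  obtain ⟨csub, hcsub⟩ := exists_ocode_of_computable (f := fun n : ℕ => n - 2)
    (Primrec.nat_sub.comp Primrec.id (Primrec.const 2)).to_comp
  obtain ⟨csel, hcsel⟩ := exists_ocode_of_computable (f := fun z : ℕ =>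
      if z.unpair.1 = 0 then z.unpair.2.unpair.1
      else if z.unpair.1 = 1 then z.unpair.2.unpair.2.unpair.1
      else z.unpair.2.unpair.2.unpair.2)
    (Primrec.ite (Primrec.eq.comp pu1 (Primrec.const 0)) (pu1.comp pu2)
      (Primrec.ite (Primrec.eq.comp pu1 (Primrec.const 1)) (pu1.comp (pu2.comp pu2))
        (pu2.comp (pu2.comp pu2)))).to_comp
  have hcid : ∀ (O : ℕ →. ℕ) (n : ℕ),
      evalo O (OCode.ofPCode Nat.Partrec.Code.id) n = Part.some n := fun O n => by
    rw [OCode.evalo_ofPCode]; exact Nat.Partrec.Code.eval_id n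
  have hconst : ∀ (m : ℕ) (O : ℕ →. ℕ) (n : ℕ),
      evalo O (OCode.ofPCode (Nat.Partrec.Code.const m)) n = Part.some m := fun m O n => by
    rw [OCode.evalo_ofPCode]; exact Nat.Partrec.Code.eval_const m n
  set cid : OCode := OCode.ofPCode Nat.Partrec.Code.id with hcid_def
  set cget : ℕ → OCode := fun m => OCode.comp .oracle (OCode.ofPCode (Nat.Partrec.Code.const m))
    with hcget_def
  set cψ' : OCode := OCode.substO (OCode.comp .oracle clin) cψ with hcψ'_def
  set cmain : OCode := OCode.comp csel (OCode.pair cid (OCode.pair (cget 0)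
    (OCode.pair (OCode.comp cψ' (OCode.pair (cget 2) (cget 3)))
      (OCode.comp .oracle cdbl)))) with hcmain_def
  set E : ℕ := cmain.toNat_s6 with hE_def
  set χ : ℕ → ℕ := fun n => X.indicator (fun _ => 1) n with hχ_def
  set f : α → ℕ → ℕ := fun a n => if n = 0 then E else if n = 1 then code a else χ (n - 2)
    with hf_def
  have hchi : ∀ n, chi X n = Part.some (χ n) := fun n => rfl
  -- basic values of f
  have hf0 : ∀ a, f a 0 = E := fun a => by simp [hf_def]
  have hf1 : ∀ a, f a 1 = code a := fun a => by simp [hf_def]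
  have hf2 : ∀ (a) (n : ℕ), f a (n + 2) = χ n := fun a n => by simp [hf_def]
  have finj : Function.Injective f := fun a a' h => codeInj (by
    rw [← hf1 a, ← hf1 a', h])
  -- f a is X-recursive
  have frec : ∀ a : α, RecursiveIn (chi X) (toPFun (f a)) := by
    intro a
    obtain ⟨csel2, hcsel2⟩ := exists_ocode_of_computable (f := fun z : ℕ =>
        if z.unpair.1 = 0 then E else if z.unpair.1 = 1 then code a else z.unpair.2)
      (Primrec.ite (Primrec.eq.comp pu1 (Primrec.const 0)) (Primrec.const E)
        (Primrec.ite (Primrec.eq.comp pu1 (Primrec.const 1)) (Primrec.const (code a))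
          pu2)).to_comp
    refine ⟨OCode.comp csel2 (OCode.pair cid (OCode.comp .oracle csub)), funext fun n => ?_⟩
    show (Nat.pair <$> evalo (chi X) cid n <*>
        (evalo (chi X) csub n >>= evalo (chi X) .oracle)) >>= evalo (chi X) csel2 = _
    rw [hcid, hcsub]
    show (Nat.pair <$> Part.some n <*> ((Part.some (n - 2)).bind (chi X))) >>= _ = _
    rw [pbind_some', hchi]
    simp only [Seq.seq, Part.bind_eq_bind, Part.map_eq_map, Part.map_some, Part.bind_some,
      pbind_some, hcsel2, Nat.unpair_pair]
    rfl
  -- the core lemma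
  have core : ∀ a b c : α, c ∈ app a b → f c ∈ k2App (f a) (f b) := by
    intro a b c hc
    set O : ℕ →. ℕ := pjoin (toPFun (f a)) (toPFun (f b)) with hO_def
    have hO : ∀ m, O m = Part.some (if m % 2 = 0 then f a (m / 2) else f b (m / 2)) := by
      intro m
      by_cases h : m % 2 = 0 <;> simp [hO_def, pjoin, toPFun, h]
    have hO0 : O 0 = Part.some E := by rw [hO]; norm_num [hf0]
    have hO2 : O 2 = Part.some (code a) := by rw [hO]; norm_num [hf1]
    have hO3 : O 3 = Part.some (code b) := by rw [hO]; norm_num [hf1]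
    have hOX : ∀ n, O (2 * n + 4) = Part.some (χ n) := by
      intro n; rw [hO]
      have e1 : (2 * n + 4) % 2 = 0 := by omega
      have e2 : (2 * n + 4) / 2 = n + 2 := by omega
      rw [if_pos e1, e2, hf2]
    have hOget : ∀ m n : ℕ, evalo O (cget m) n = O m := by
      intro m n
      show evalo O (OCode.ofPCode (Nat.Partrec.Code.const m)) n >>= evalo O .oracle = O m
      rw [hconst]
      simp only [Part.bind_eq_bind, Part.bind_some, pbind_some, pbind_some']
      rfl
    have hψ' : evalo O cψ' = ψ := by
      rw [hcψ'_def, OCode.evalo_substO]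
      have hor : evalo O (OCode.comp .oracle clin) = chi X := by
        funext n
        show evalo O clin n >>= evalo O .oracle = chi X n
        rw [hclin]
        simp only [Part.bind_eq_bind, Part.bind_some, pbind_some, pbind_some']
        show O (2 * n + 4) = chi X n
        rw [hOX, hchi]
      rw [hor, hcψ]
    have hj : ψ (Nat.pair (code a) (code b)) = Part.some (code c) := happ a b c hc
    have hev : ∀ n, evalo O cmain n = Part.some (f c n) := by
      intro n
      have hOn : O (2 * n) = Part.some (f a n) := by
        rw [hO]
        have e1 : (2 * n) % 2 = 0 := by omega
        have e2 : (2 * n) / 2 = n := by omega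
        rw [if_pos e1, e2]
      show (Nat.pair <$> evalo O cid n <*> (Nat.pair <$> evalo O (cget 0) n <*>
          (Nat.pair <$> (evalo O (OCode.pair (cget 2) (cget 3)) n >>= evalo O cψ') <*>
            (evalo O cdbl n >>= evalo O .oracle)))) >>= evalo O csel = _
      rw [hcid, hcdbl]
      show _ = Part.some (f c n)
      rw [show evalo O (OCode.pair (cget 2) (cget 3)) n =
          Nat.pair <$> evalo O (cget 2) n <*> evalo O (cget 3) n from rfl]
      rw [hOget, hOget, hOget, hO0, hO2, hO3, hψ']
      simp only [evalo, Seq.seq, Part.bind_eq_bind, Part.map_eq_map, Part.map_some,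
        Part.bind_some, pbind_some, pbind_some', hOn, hj, hcsel, Nat.unpair_pair]
      rcases n with _ | _ | n
      · simp [hf0]
      · simp [hf1]
      · simp only [hf2]
        simp [hf_def]
    have hfa0eq : partToTotal (phi O (f a 0)) = partToTotal (evalo O cmain) := by
      rw [hf0, phi, hE_def, OCode.ofNat_toNat_s6]
    have hdom : ∀ n, (evalo O cmain n).Dom := fun n => by rw [hev n]; trivial
    have hmem : f c ∈ partToTotal (evalo O cmain) :=
      ⟨hdom, funext fun n => Part.get_eq_of_mem (by rw [hev n]; exact Part.mem_some _) (hdom n)⟩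
    show f c ∈ partToTotal (phi O (f a 0))
    rw [hfa0eq]
    exact hmem
  refine ⟨⟨fun a => ⟨f a, frec a⟩, ?_, ?_⟩, ⟨f, finj, core⟩⟩
  · intro a a' h
    exact finj (congrArg Subtype.val h)
  · intro a a' c hc
    exact Part.mem_bind_iff.2 ⟨f c, core a a' c hc, Part.mem_assert (frec c) (Part.mem_some _)⟩

end PCAEmb
end
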